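/- arXiv:math/9909163 — 6 statements merged into one kernel-verified Lean document; each statement's English description precedes it below -/
import Mathlib

section
/- For every code C ⊆ Mat_{n,s}(F_q) with at least two elements, the cardinality of C satisfies #C ≤ q^{ns - ρ(C) + 1}, where ρ(C) is the minimum ρ-distance between distinct code words. In particular, any code with q^k elements has ρ(C) ≤ ns - k + 1 (Singleton-type bound for the Rosenbloom–Tsfasman metric). -/
/-- Rosenbloom–Tsfasman weight of a row vector: the largest (1-based) index of a
nonzero entry, `0` for the zero vector. -/
def rhoRow {F : Type*} [Zero F] [DecidableEq F] {s : ℕ} (ω : Fin s → F) : ℕ :=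
  (Finset.univ.filter fun j => ω j ≠ 0).sup fun j => j.1 + 1

/-- Rosenbloom–Tsfasman weight of a matrix: the sum of the ρ-weights of its rows. -/
def rhoMat {F : Type*} [Zero F] [DecidableEq F] {n s : ℕ}
    (Ω : Matrix (Fin n) (Fin s) F) : ℕ :=
  ∑ i, rhoRow (Ω i)

/-- The minimum ρ-distance between distinct code words of a code. -/
noncomputable def rhoCode {F : Type*} [Field F] [DecidableEq F] {n s : ℕ}
    (C : Finset (Matrix (Fin n) (Fin s) F)) : ℕ :=
  sInf {d | ∃ Ω ∈ C, ∃ Ω' ∈ C, Ω ≠ Ω' ∧ rhoMat (Ω - Ω') = d}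

lemma sum_min_le (s : ℕ) : ∀ (n t : ℕ), (∑ i ∈ Finset.range n, min s (t - i * s)) ≤ t
  | 0, t => by simp
  | n+1, t => by
    rw [Finset.sum_range_succ']
    have h1 : ∀ i : ℕ, t - (i + 1) * s = (t - s) - i * s := fun i => by
      rw [Nat.succ_mul]; omega
    have h2 : (∑ i ∈ Finset.range n, min s (t - (i + 1) * s)) ≤ t - s := by
      calc (∑ i ∈ Finset.range n, min s (t - (i + 1) * s))
          = ∑ i ∈ Finset.range n, min s ((t - s) - i * s) := by
            exact Finset.sum_congr rfl fun i _ => by rw [h1]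
        _ ≤ t - s := sum_min_le s n (t - s)
    simp only [Nat.zero_mul, Nat.sub_zero]
    omega

lemma rhoRow_le_s {F : Type*} [Zero F] [DecidableEq F] {s : ℕ} (ω : Fin s → F) :
    rhoRow ω ≤ s :=
  Finset.sup_le fun j _ => j.2

lemma rhoMat_le_ns {F : Type*} [Zero F] [DecidableEq F] {n s : ℕ}
    (Ω : Matrix (Fin n) (Fin s) F) : rhoMat Ω ≤ n * s := by
  calc rhoMat Ω ≤ ∑ _i : Fin n, s := Finset.sum_le_sum fun i _ => rhoRow_le_s (Ω i)
    _ = n * s := by simp [Finset.sum_const, Finset.card_univ]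

lemma rhoMat_pos {F : Type*} [Zero F] [DecidableEq F] {n s : ℕ}
    {Ω : Matrix (Fin n) (Fin s) F} (h : Ω ≠ 0) : 1 ≤ rhoMat Ω := by
  have : ∃ i j, Ω i j ≠ 0 := by
    by_contra hc
    push_neg at hc
    exact h (by ext i j; exact hc i j)
  obtain ⟨i, j, hij⟩ := this
  have h1 : j.1 + 1 ≤ rhoRow (Ω i) :=
    Finset.le_sup (f := fun j : Fin s => j.1 + 1)
      (Finset.mem_filter.mpr ⟨Finset.mem_univ j, hij⟩)
  have h2 : rhoRow (Ω i) ≤ rhoMat Ω :=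
    Finset.single_le_sum (f := fun i => rhoRow (Ω i)) (fun _ _ => Nat.zero_le _)
      (Finset.mem_univ i)
  omega

/-- Shift equivalence for subtypes of `Fin`. -/
def finSubtypeEquiv (N t : ℕ) : {x : Fin N // t ≤ x.1} ≃ Fin (N - t) where
  toFun x := ⟨x.1.1 - t, by have := x.1.2; have := x.2; omega⟩
  invFun y := ⟨⟨y.1 + t, by have := y.2; omega⟩, Nat.le_add_left t y.1⟩
  left_inv x := by
    apply Subtype.ext; apply Fin.ext
    have := x.2; simp; omega
  right_inv y := by
    apply Fin.ext; simp

theorem singleton_bound_RT {q n s : ℕ} (F : Type*) [Field F] [Fintype F] [DecidableEq F]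
    (hq : Fintype.card F = q) (C : Finset (Matrix (Fin n) (Fin s) F)) (hC : 2 ≤ C.card) :
    C.card ≤ q ^ (n * s - rhoCode C + 1) ∧
      ∀ k : ℕ, C.card = q ^ k → rhoCode C ≤ n * s - k + 1 := by
  classical
  obtain ⟨a, ha, b, hb, hab⟩ := Finset.one_lt_card.mp hC
  set d := rhoCode C with hd
  have hSne : {e | ∃ Ω ∈ C, ∃ Ω' ∈ C, Ω ≠ Ω' ∧ rhoMat (Ω - Ω') = e}.Nonempty :=
    ⟨rhoMat (a - b), a, ha, b, hb, hab, rfl⟩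
  have hmem : d ∈ {e | ∃ Ω ∈ C, ∃ Ω' ∈ C, Ω ≠ Ω' ∧ rhoMat (Ω - Ω') = e} :=
    Nat.sInf_mem hSne
  obtain ⟨Ω₀, _, Ω₀', _, hne₀, hρ₀⟩ := hmem
  have hd1 : 1 ≤ d := by
    rw [← hρ₀]; exact rhoMat_pos (sub_ne_zero.mpr hne₀)
  have hdN : d ≤ n * s := by
    calc d ≤ rhoMat (a - b) := Nat.sInf_le ⟨a, ha, b, hb, hab, rfl⟩
      _ ≤ n * s := rhoMat_le_ns _
  set t := d - 1 with ht
  -- the projection map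
  set f : Matrix (Fin n) (Fin s) F → ({p : Fin n × Fin s // t ≤ p.1.1 * s + p.2.1} → F) :=
    fun Ω p => Ω p.1.1 p.1.2 with hf
  have hinj : Set.InjOn f C := by
    intro Ω hΩ Ω' hΩ' hfe
    by_contra hne
    have hle : d ≤ rhoMat (Ω - Ω') := Nat.sInf_le ⟨Ω, hΩ, Ω', hΩ', hne, rfl⟩
    have hrow : ∀ i : Fin n, rhoRow ((Ω - Ω') i) ≤ min s (t - i.1 * s) := by
      intro i
      apply Finset.sup_le
      intro j hj
      rw [Finset.mem_filter] at hj
      have hjne : Ω i j ≠ Ω' i j := by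
        have := hj.2
        simpa [Matrix.sub_apply, sub_ne_zero] using this
      have hidx : i.1 * s + j.1 < t := by
        by_contra hge
        push_neg at hge
        exact hjne (congrFun hfe ⟨(i, j), hge⟩)
      have hjs := j.2
      omega
    have hle' : rhoMat (Ω - Ω') ≤ t := by
      calc rhoMat (Ω - Ω') ≤ ∑ i : Fin n, min s (t - i.1 * s) :=
            Finset.sum_le_sum fun i _ => hrow i
        _ = ∑ i ∈ Finset.range n, min s (t - i * s) := by
            rw [Finset.sum_range fun i => min s (t - i * s)]
        _ ≤ t := sum_min_le s n t
    omega
  have hcardsub : Fintype.card {p : Fin n × Fin s // t ≤ p.1.1 * s + p.2.1} = n * s - t := by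
    have e1 : {p : Fin n × Fin s // t ≤ p.1.1 * s + p.2.1} ≃ {x : Fin (n * s) // t ≤ x.1} :=
      Equiv.subtypeEquiv finProdFinEquiv (by
        intro p
        simp [finProdFinEquiv, Nat.mul_comm]
        omega)
    rw [Fintype.card_congr (e1.trans (finSubtypeEquiv (n * s) t)), Fintype.card_fin]
  have hcard : C.card ≤ q ^ (n * s - t) := by
    have := Finset.card_le_card_of_injOn f (fun x _ => Finset.mem_univ (f x)) hinj
    calc C.card ≤ (Finset.univ : Finset ({p : Fin n × Fin s // t ≤ p.1.1 * s + p.2.1} → F)).card :=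
          this
      _ = q ^ (n * s - t) := by
          rw [Finset.card_univ, Fintype.card_fun, hq, hcardsub]
  have hexp : n * s - t = n * s - d + 1 := by omega
  constructor
  · rw [← hexp]; exact hcard
  · intro k hk
    have hq2 : 2 ≤ q := by rw [← hq]; exact Fintype.one_lt_card
    have : q ^ k ≤ q ^ (n * s - t) := hk ▸ hcard
    have hkle : k ≤ n * s - t := (Nat.pow_le_pow_iff_right hq2).mp this
    omega
end

section
/- A distribution D ⊆ Q^n(q^s) consisting of q^k points is an optimum [ns,k]_s-distribution (i.e., every elementary box Δ^M_A ∈ E_s(q,n) of volume q^{-k} contains exactly one point of D) if and only if its code C⟨D⟩ ⊆ Mat_{n,s}(F_q) is an MDS code in the metric ρ, i.e., ρ(C⟨D⟩) = ns - k + 1. -/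
/-- The point of `[0,1)^n` whose `j`-th coordinate has `q`-ary digits
`ξ_i(x_j) = φ (Ω j i)`, i.e. `x_j = Σ_{i=1}^s ξ_i(x_j) q^{i-s-1}`. -/
noncomputable def coordOf {q : ℕ} {F : Type*} (φ : F ≃ Fin q) {n s : ℕ}
    (Ω : Matrix (Fin n) (Fin s) F) (j : Fin n) : ℝ :=
  ∑ i : Fin s, ((φ (Ω j i) : ℕ) : ℝ) * (q : ℝ) ^ ((i : ℤ) + 1 - s - 1)

open Finset

lemma exists_le_and_sum_eq {ι : Type*} [Fintype ι] [DecidableEq ι] {c : ι → ℕ} :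
    ∀ {k : ℕ}, k ≤ ∑ i, c i → ∃ A ≤ c, ∑ i, A i = k
  | 0, _ => ⟨0, fun _ => Nat.zero_le _, by simp⟩
  | k + 1, hk => by
    obtain ⟨A, hAc, hsum⟩ := exists_le_and_sum_eq (c := c) (k := k) (by omega)
    obtain ⟨i, -, hi⟩ := exists_lt_of_sum_lt (s := univ) (hsum.trans_lt hk)
    refine ⟨A + Pi.single i 1, fun j => ?_, ?_⟩
    · rcases eq_or_ne j i with rfl | hj
      · simpa using hi
      · simpa [hj] using hAc j
    · simp [sum_add_distrib, hsum]

lemma card_piFinset_range_pow {ι : Type*} [Fintype ι] [DecidableEq ι] (q : ℕ) (A : ι → ℕ) :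
    (Fintype.piFinset fun i => range (q ^ A i)).card = q ^ ∑ i, A i := by
  simp [Fintype.card_piFinset, prod_pow_eq_pow_sum]

lemma forall_card_filter_eq_one_iff_injOn {α β : Type*} [DecidableEq β] {D : Finset α}
    {P : Finset β} {f : α → β} (hmaps : Set.MapsTo f D P) (hcard : P.card = D.card) :
    (∀ b ∈ P, (D.filter (f · = b)).card = 1) ↔ Set.InjOn f D := by
  refine ⟨fun h a ha a' ha' heq => ?_, fun hinj b hb => ?_⟩
  · exact card_le_one.1 (h (f a) (hmaps ha)).le a (mem_filter.2 ⟨ha, rfl⟩) a'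
      (mem_filter.2 ⟨ha', heq.symm⟩)
  · have himage : D.image f = P :=
      eq_of_subset_of_card_le (image_subset_iff.2 hmaps) (by rw [card_image_of_injOn hinj, hcard])
    obtain ⟨a, ha, rfl⟩ := mem_image.1 (himage ▸ hb)
    refine card_eq_one.2 ⟨a, eq_singleton_iff_unique_mem.2 ⟨by simp [ha], ?_⟩⟩
    intro a' ha'
    rw [mem_filter] at ha'
    exact hinj ha'.1 ha ha'.2

lemma div_mul_mem_Ico_iff {N d e m : ℕ} (hd : 0 < d) (he : 0 < e) :
    ((m : ℝ) / e ≤ N / (d * e) ∧ (N : ℝ) / (d * e) < (m + 1) / e) ↔ N / d = m := by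
  have he' : (0 : ℝ) < e := by exact_mod_cast he
  rw [← Nat.floor_div_eq_div (K := ℝ), Nat.floor_eq_iff (by positivity), ← div_div,
    div_le_div_iff_of_pos_right he', div_lt_div_iff_of_pos_right he']

section Digits

variable {q s : ℕ}

lemma finFunctionFinEquiv_div_pow_lt (hq : 0 < q) (f : Fin s → Fin q) (b : ℕ) :
    (finFunctionFinEquiv f : ℕ) / q ^ b < q ^ (s - b) := by
  rw [Nat.div_lt_iff_lt_mul (by positivity), ← pow_add]
  exact (finFunctionFinEquiv f).isLt.trans_le (Nat.pow_le_pow_right hq (by omega))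

lemma val_eq_finFunctionFinEquiv_div_pow {f : Fin s → Fin q} {b : ℕ} {i : Fin s} (hi : b ≤ i) :
    (f i : ℕ) = (finFunctionFinEquiv f : ℕ) / q ^ b / q ^ ((i : ℕ) - b) % q := by
  rw [Nat.div_div_eq_div_mul, ← pow_add, Nat.add_sub_cancel' hi,
    ← finFunctionFinEquiv_symm_apply_val, Equiv.symm_apply_apply]

lemma finFunctionFinEquiv_div_pow_eq_iff (hq : 0 < q) {f g : Fin s → Fin q} {b : ℕ} :
    (finFunctionFinEquiv f : ℕ) / q ^ b = (finFunctionFinEquiv g : ℕ) / q ^ b ↔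
      ∀ i : Fin s, b ≤ i → f i = g i := by
  refine ⟨fun h i hi => Fin.ext ?_, fun h => ?_⟩
  · rw [val_eq_finFunctionFinEquiv_div_pow hi, val_eq_finFunctionFinEquiv_div_pow hi, h]
  · have hdigits : finFunctionFinEquiv.symm ⟨_, finFunctionFinEquiv_div_pow_lt hq f b⟩ =
        finFunctionFinEquiv.symm ⟨_, finFunctionFinEquiv_div_pow_lt hq g b⟩ := by
      funext t
      have hbt : b + t < s := by omega
      have hf := val_eq_finFunctionFinEquiv_div_pow (f := f) (i := ⟨b + t, hbt⟩) (b.le_add_right t)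
      have hg := val_eq_finFunctionFinEquiv_div_pow (f := g) (i := ⟨b + t, hbt⟩) (b.le_add_right t)
      simp only [Nat.add_sub_cancel_left] at hf hg
      ext
      rw [finFunctionFinEquiv_symm_apply_val, finFunctionFinEquiv_symm_apply_val, ← hf, ← hg,
        h _ (b.le_add_right t)]
    exact congrArg Fin.val (finFunctionFinEquiv.symm.injective hdigits)

end Digits

section RosenbloomTsfasman

variable {F : Type*} {n s : ℕ}

lemma rhoRow_le_iff [Zero F] [DecidableEq F] {ω : Fin s → F} {c : ℕ} :
    rhoRow ω ≤ c ↔ ∀ i : Fin s, c ≤ i → ω i = 0 := by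
  simp only [rhoRow, Finset.sup_le_iff, mem_filter, mem_univ, true_and]
  exact forall_congr' fun i => ⟨fun h hi => by_contra fun h0 => by have := h h0; omega,
    fun h h0 => by_contra fun hlt => h0 (h (by omega))⟩

lemma rhoRow_le [Zero F] [DecidableEq F] (ω : Fin s → F) : rhoRow ω ≤ s :=
  Finset.sup_le fun i _ => i.isLt

lemma sum_sub_rhoRow [Zero F] [DecidableEq F] (Ω : Matrix (Fin n) (Fin s) F) :
    ∑ j, (s - rhoRow (Ω j)) = n * s - rhoMat Ω := by
  rw [sum_tsub_distrib _ fun j _ => rhoRow_le (Ω j)]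
  simp [rhoMat]

variable [Field F] [DecidableEq F] {C : Finset (Matrix (Fin n) (Fin s) F)}

lemma rhoCode_le {Ω Ω' : Matrix (Fin n) (Fin s) F} (hΩ : Ω ∈ C) (hΩ' : Ω' ∈ C) (hne : Ω ≠ Ω') :
    rhoCode C ≤ rhoMat (Ω - Ω') :=
  Nat.sInf_le ⟨Ω, hΩ, Ω', hΩ', hne, rfl⟩

lemma rhoCode_eq_iff_forall_le {d : ℕ} (hex : ∃ Ω ∈ C, ∃ Ω' ∈ C, Ω ≠ Ω' ∧ rhoMat (Ω - Ω') ≤ d) :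
    rhoCode C = d ↔ ∀ Ω ∈ C, ∀ Ω' ∈ C, Ω ≠ Ω' → d ≤ rhoMat (Ω - Ω') := by
  refine ⟨fun h Ω hΩ Ω' hΩ' hne => h ▸ rhoCode_le hΩ hΩ' hne, fun hle => ?_⟩
  obtain ⟨Ω, hΩ, Ω', hΩ', hne, hd⟩ := hex
  refine le_antisymm ((rhoCode_le hΩ hΩ' hne).trans hd) (le_csInf ⟨_, Ω, hΩ, Ω', hΩ', hne, rfl⟩ ?_)
  rintro _ ⟨Ω, hΩ, Ω', hΩ', hne, rfl⟩
  exact hle Ω hΩ Ω' hΩ' hne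

end RosenbloomTsfasman

section Boxes

variable {q : ℕ} {F : Type*} {n s : ℕ} (φ : F ≃ Fin q)

def scaledCoord (Ω : Matrix (Fin n) (Fin s) F) (j : Fin n) : ℕ :=
  finFunctionFinEquiv fun i => φ (Ω j i)

lemma coordOf_eq_scaledCoord_div (hq : 0 < q) (Ω : Matrix (Fin n) (Fin s) F) (j : Fin n) :
    coordOf φ Ω j = scaledCoord φ Ω j / (q : ℝ) ^ s := by
  have hq' : (q : ℝ) ≠ 0 := by positivity
  rw [coordOf, scaledCoord, finFunctionFinEquiv_apply, Nat.cast_sum, sum_div]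
  refine sum_congr rfl fun i _ => ?_
  rw [show (i : ℤ) + 1 - s - 1 = (i : ℕ) - (s : ℤ) by ring, zpow_sub₀ hq', zpow_natCast,
    zpow_natCast]
  push_cast
  ring

/-- The position `m` of the elementary box of shape `A` that contains the point with code
word `Ω`. -/
def boxIndex (A : Fin n → ℕ) (Ω : Matrix (Fin n) (Fin s) F) : Fin n → ℕ :=
  fun j => scaledCoord φ Ω j / q ^ (s - A j)

variable {A : Fin n → ℕ}

lemma boxIndex_mem_piFinset (hq : 0 < q) (hA : ∀ j, A j ≤ s) (Ω : Matrix (Fin n) (Fin s) F) :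
    boxIndex φ A Ω ∈ Fintype.piFinset fun j => range (q ^ A j) :=
  Fintype.mem_piFinset.2 fun j => mem_range.2 <| by
    have := finFunctionFinEquiv_div_pow_lt hq (fun i => φ (Ω j i)) (s - A j)
    rwa [Nat.sub_sub_self (hA j)] at this

lemma mem_box_iff (hq : 0 < q) (hA : ∀ j, A j ≤ s) (m : Fin n → ℕ)
    (Ω : Matrix (Fin n) (Fin s) F) :
    (∀ j, (m j : ℝ) / (q : ℝ) ^ (A j) ≤ coordOf φ Ω j ∧
        coordOf φ Ω j < ((m j : ℝ) + 1) / (q : ℝ) ^ (A j)) ↔ boxIndex φ A Ω = m := by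
  rw [funext_iff]
  refine forall_congr' fun j => ?_
  have hs : (q : ℝ) ^ s = (q : ℝ) ^ (s - A j) * (q : ℝ) ^ A j := by
    rw [← pow_add, Nat.sub_add_cancel (hA j)]
  have := div_mul_mem_Ico_iff (N := scaledCoord φ Ω j) (m := m j) (pow_pos hq (s - A j))
    (pow_pos hq (A j))
  push_cast at this
  rwa [coordOf_eq_scaledCoord_div φ hq, hs]

lemma forall_card_box_eq_one_iff_injOn (hq : 0 < q) (hA : ∀ j, A j ≤ s)
    {D : Finset (Matrix (Fin n) (Fin s) F)} (hcard : D.card = q ^ ∑ j, A j) :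
    (∀ m : Fin n → ℕ, (∀ j, m j < q ^ A j) →
      (D.filter fun Ω => ∀ j, (m j : ℝ) / (q : ℝ) ^ (A j) ≤ coordOf φ Ω j ∧
        coordOf φ Ω j < ((m j : ℝ) + 1) / (q : ℝ) ^ (A j)).card = 1) ↔
      Set.InjOn (boxIndex (s := s) φ A) D := by
  rw [← forall_card_filter_eq_one_iff_injOn (fun Ω _ => boxIndex_mem_piFinset φ hq hA Ω)
    (by rw [card_piFinset_range_pow, hcard])]
  simp only [Fintype.mem_piFinset, mem_range]
  exact forall₂_congr fun m _ => by rw [filter_congr fun Ω _ => mem_box_iff φ hq hA m Ω]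

lemma boxIndex_eq_iff [AddGroup F] [DecidableEq F] (hq : 0 < q)
    (Ω Ω' : Matrix (Fin n) (Fin s) F) :
    boxIndex φ A Ω = boxIndex φ A Ω' ↔ ∀ j, rhoRow ((Ω - Ω') j) ≤ s - A j := by
  simp only [funext_iff, boxIndex, scaledCoord, finFunctionFinEquiv_div_pow_eq_iff hq,
    rhoRow_le_iff, Matrix.sub_apply, sub_eq_zero, φ.injective.eq_iff]

lemma rhoMat_sub_le_of_boxIndex_eq [AddGroup F] [DecidableEq F] (hq : 0 < q)
    (hA : ∀ j, A j ≤ s) {Ω Ω' : Matrix (Fin n) (Fin s) F}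
    (h : boxIndex φ A Ω = boxIndex φ A Ω') : rhoMat (Ω - Ω') ≤ n * s - ∑ j, A j :=
  calc rhoMat (Ω - Ω') ≤ ∑ j, (s - A j) := sum_le_sum fun j _ => (boxIndex_eq_iff φ hq Ω Ω').1 h j
    _ = n * s - ∑ j, A j := by simp [sum_tsub_distrib _ fun j _ => hA j]

lemma exists_boxIndex_eq_of_rhoMat_sub_le [AddGroup F] [DecidableEq F] (hq : 0 < q) {k : ℕ}
    (hkn : k ≤ n * s) {Ω Ω' : Matrix (Fin n) (Fin s) F} (h : rhoMat (Ω - Ω') ≤ n * s - k) :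
    ∃ A : Fin n → ℕ, (∀ j, A j ≤ s) ∧ ∑ j, A j = k ∧ boxIndex φ A Ω = boxIndex φ A Ω' := by
  obtain ⟨A, hA, hsum⟩ := exists_le_and_sum_eq (c := fun j => s - rhoRow ((Ω - Ω') j)) (k := k)
    (by rw [sum_sub_rhoRow]; omega)
  refine ⟨A, fun j => (hA j).trans (Nat.sub_le _ _), hsum, (boxIndex_eq_iff φ hq Ω Ω').2 ?_⟩
  intro j
  have : A j ≤ s - rhoRow ((Ω - Ω') j) := hA j
  have := rhoRow_le ((Ω - Ω') j)
  omega

variable [AddGroup F] [DecidableEq F] {k : ℕ} {D : Finset (Matrix (Fin n) (Fin s) F)}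

lemma forall_injOn_boxIndex_iff (hq : 0 < q) (hkn : k ≤ n * s) :
    (∀ A : Fin n → ℕ, (∀ j, A j ≤ s) → ∑ j, A j = k → Set.InjOn (boxIndex (s := s) φ A) D) ↔
      ∀ Ω ∈ D, ∀ Ω' ∈ D, Ω ≠ Ω' → n * s - k + 1 ≤ rhoMat (Ω - Ω') := by
  refine ⟨fun h Ω hΩ Ω' hΩ' hne => ?_, fun h A hA hsum Ω hΩ Ω' hΩ' heq => ?_⟩
  · by_contra! hlt
    obtain ⟨A, hA, hsum, heq⟩ :=
      exists_boxIndex_eq_of_rhoMat_sub_le φ hq hkn (Ω := Ω) (Ω' := Ω') (by omega)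
    exact hne (h A hA hsum hΩ hΩ' heq)
  · by_contra hne
    have := h Ω hΩ Ω' hΩ' hne
    have := rhoMat_sub_le_of_boxIndex_eq φ hq hA heq
    omega

end Boxes

/-- The Singleton bound for the ρ-metric. -/
lemma exists_rhoMat_sub_le_of_pow_le_card {F : Type*} [AddGroup F] [Fintype F] [Nontrivial F]
    [DecidableEq F] {n s k : ℕ} {D : Finset (Matrix (Fin n) (Fin s) F)} (hk : 1 ≤ k)
    (hkn : k ≤ n * s) (hcard : Fintype.card F ^ k ≤ D.card) :
    ∃ Ω ∈ D, ∃ Ω' ∈ D, Ω ≠ Ω' ∧ rhoMat (Ω - Ω') ≤ n * s - k + 1 := by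
  obtain ⟨A, hA, hsum⟩ := exists_le_and_sum_eq (c := fun _ : Fin n => s) (k := k - 1)
    (by simp; omega)
  have hq : 1 < Fintype.card F := Fintype.one_lt_card
  have hlt : (Fintype.piFinset fun j => range (Fintype.card F ^ A j)).card < D.card := by
    rw [card_piFinset_range_pow, hsum]
    exact (Nat.pow_lt_pow_right hq (by omega)).trans_le hcard
  obtain ⟨Ω, hΩ, Ω', hΩ', hne, heq⟩ := exists_ne_map_eq_of_card_lt_of_maps_to hlt
    fun Ω _ => boxIndex_mem_piFinset (Fintype.equivFin F) (by omega) hA Ω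
  have := rhoMat_sub_le_of_boxIndex_eq (Fintype.equivFin F) (by omega) hA heq
  exact ⟨Ω, hΩ, Ω', hΩ', hne, by omega⟩

theorem optimum_iff_MDS_general {q n s k : ℕ} (F : Type*) [Field F] [Fintype F] [DecidableEq F]
    (hq : Fintype.card F = q) (φ : F ≃ Fin q)
    (hk : 1 ≤ k) (hkn : k ≤ n * s)
    (D : Finset (Matrix (Fin n) (Fin s) F)) (hcard : D.card = q ^ k) :
    (∀ A m : Fin n → ℕ, (∀ j, A j ≤ s) → (∑ j, A j) = k →
        (∀ j, m j < q ^ (A j)) →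
        (D.filter fun Ω => ∀ j, (m j : ℝ) / (q : ℝ) ^ (A j) ≤ coordOf φ Ω j ∧
            coordOf φ Ω j < ((m j : ℝ) + 1) / (q : ℝ) ^ (A j)).card = 1) ↔
      rhoCode D = n * s - k + 1 := by
  have hq0 : 0 < q := hq ▸ Fintype.card_pos
  calc _ ↔ ∀ A : Fin n → ℕ, (∀ j, A j ≤ s) → ∑ j, A j = k → Set.InjOn (boxIndex (s := s) φ A) D :=
        forall_congr' fun A => ⟨fun h hA hsum =>
            (forall_card_box_eq_one_iff_injOn φ hq0 hA (hsum ▸ hcard)).1 fun m => h m hA hsum,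
          fun h m hA hsum => (forall_card_box_eq_one_iff_injOn φ hq0 hA (hsum ▸ hcard)).2
            (h hA hsum) m⟩
    _ ↔ ∀ Ω ∈ D, ∀ Ω' ∈ D, Ω ≠ Ω' → n * s - k + 1 ≤ rhoMat (Ω - Ω') :=
        forall_injOn_boxIndex_iff φ hq0 hkn
    _ ↔ rhoCode D = n * s - k + 1 :=
        (rhoCode_eq_iff_forall_le
          (exists_rhoMat_sub_le_of_pow_le_card hk hkn (by rw [hq, hcard]))).symm

theorem optimum_iff_MDS {q n s k : ℕ} (F : Type*) [Field F] [Fintype F] [DecidableEq F]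
    (hq : Fintype.card F = q) (φ : F ≃ Fin q) (hφ : (φ 0 : ℕ) = 0)
    (hk : 1 ≤ k) (hkn : k ≤ n * s)
    (D : Finset (Matrix (Fin n) (Fin s) F)) (hcard : D.card = q ^ k) :
    (∀ A m : Fin n → ℕ, (∀ j, A j ≤ s) → (∑ j, A j) = k →
        (∀ j, m j < q ^ (A j)) →
        (D.filter fun Ω => ∀ j, (m j : ℝ) / (q : ℝ) ^ (A j) ≤ coordOf φ Ω j ∧
            coordOf φ Ω j < ((m j : ℝ) + 1) / (q : ℝ) ^ (A j)).card = 1) ↔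
      rhoCode D = n * s - k + 1 :=
  optimum_iff_MDS_general F hq φ hk hkn D hcard
end

section
/- A point X ∈ Q^n(q^s) lies in some elementary box Δ^0_A ∈ E_s(q,n) anchored at the origin with volume Π_j a_j = q^{-k} (i.e., a_1+...+a_n = k) if and only if ρ(X) ≤ ns - k. -/
/-- ρ-weight of a digit string `ξ = (ξ_1,...,ξ_s)`: the largest (1-based) index `i`
with `ξ_i ≠ 0`, and `0` for the zero string. -/
def rhoDig {s : ℕ} (ξ : Fin s → ℕ) : ℕ :=
  (Finset.univ.filter fun i => ξ i ≠ 0).sup fun i => i.1 + 1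

lemma rhoDig_le_iff {s m : ℕ} (ξ : Fin s → ℕ) :
    rhoDig ξ ≤ m ↔ ∀ i : Fin s, ξ i ≠ 0 → i.1 + 1 ≤ m := by
  simp [rhoDig, Finset.sup_le_iff]

lemma rhoDig_le_s {s : ℕ} (ξ : Fin s → ℕ) : rhoDig ξ ≤ s := by
  rw [rhoDig_le_iff]; exact fun i _ => i.2

lemma range_sum_lt {q t : ℕ} (hq : 2 ≤ q) (c : ℕ → ℕ) (h : ∀ i < t, c i < q) :
    ∑ i ∈ Finset.range t, c i * q ^ i < q ^ t := by
  induction t with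
  | zero => simp
  | succ t ih =>
    rw [Finset.sum_range_succ, pow_succ]
    have h1 : ∑ i ∈ Finset.range t, c i * q ^ i < q ^ t := ih (fun i hi => h i (by omega))
    have h2 : c t * q ^ t ≤ (q - 1) * q ^ t :=
      Nat.mul_le_mul_right _ (by have := h t (by omega); omega)
    have h3 : q ^ t + (q - 1) * q ^ t = q ^ t * q := by
      have hq1 : 1 + (q - 1) = q := by omega
      calc q ^ t + (q - 1) * q ^ t = (1 + (q - 1)) * q ^ t := by ring
        _ = q ^ t * q := by rw [hq1]; ring
    omega

lemma nat_key {q s m : ℕ} (hq : 2 ≤ q) (ξ : Fin s → ℕ) (hξ : ∀ i, ξ i < q) :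
    (∑ i : Fin s, ξ i * q ^ i.1) < q ^ m ↔ rhoDig ξ ≤ m := by
  constructor
  · intro h
    rw [rhoDig_le_iff]
    intro i hi
    by_contra hc
    have h0 : q ^ m ≤ q ^ i.1 := Nat.pow_le_pow_right (by omega) (by omega)
    have h1 : q ^ i.1 ≤ ξ i * q ^ i.1 :=
      Nat.le_mul_of_pos_left _ (Nat.pos_of_ne_zero hi)
    have h2 : ξ i * q ^ i.1 ≤ ∑ j : Fin s, ξ j * q ^ j.1 :=
      Finset.single_le_sum (f := fun j : Fin s => ξ j * q ^ j.1)
        (fun _ _ => Nat.zero_le _) (Finset.mem_univ i)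
    omega
  · intro h
    have hz : ∀ i : Fin s, m ≤ i.1 → ξ i = 0 := by
      intro i hi; by_contra hc
      have := (rhoDig_le_iff ξ).1 h i hc; omega
    set c : ℕ → ℕ := fun i => if h : i < s then ξ ⟨i, h⟩ else 0 with hc
    have heq : (∑ i : Fin s, ξ i * q ^ i.1) = ∑ i ∈ Finset.range s, c i * q ^ i := by
      rw [← Fin.sum_univ_eq_sum_range (fun i => c i * q ^ i) s]
      refine Finset.sum_congr rfl fun i _ => ?_
      simp [hc, i.2]
    rw [heq]
    have hsub : ∑ i ∈ Finset.range s, c i * q ^ i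
        = ∑ i ∈ Finset.range (min m s), c i * q ^ i := by
      refine (Finset.sum_subset (Finset.range_subset_range.2 (min_le_right m s)) ?_).symm
      intro i hi hni
      simp only [Finset.mem_range] at hi hni
      have : m ≤ i := by omega
      simp [hc, hi, hz ⟨i, hi⟩ this]
    rw [hsub]
    calc ∑ i ∈ Finset.range (min m s), c i * q ^ i < q ^ (min m s) := by
          refine range_sum_lt hq c fun i hi => ?_
          have his : i < s := by omega
          simp only [hc, dif_pos his]
          exact hξ _
      _ ≤ q ^ m := Nat.pow_le_pow_right (by omega) (min_le_left m s)

lemma exists_le_sum : ∀ {n : ℕ} (b : Fin n → ℕ) (k : ℕ), k ≤ ∑ j, b j →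
    ∃ A : Fin n → ℕ, (∀ j, A j ≤ b j) ∧ ∑ j, A j = k := by
  intro n
  induction n with
  | zero =>
    intro b k hk
    simp only [Finset.univ_eq_empty, Finset.sum_empty, Nat.le_zero] at hk
    exact ⟨fun _ => 0, fun j => j.elim0, by simp [hk]⟩
  | succ n ih =>
    intro b k hk
    rw [Fin.sum_univ_succ] at hk
    obtain ⟨A', hA', hsum⟩ := ih (fun j => b j.succ) (k - min k (b 0))
      (show k - min k (b 0) ≤ ∑ j : Fin n, b j.succ by omega)
    refine ⟨Fin.cons (min k (b 0)) A', ?_, ?_⟩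
    · intro j
      refine Fin.cases ?_ ?_ j
      · simp
      · intro i; simpa using hA' i
    · rw [Fin.sum_univ_succ]
      simp only [Fin.cons_zero, Fin.cons_succ]
      rw [hsum]; omega

theorem mem_elementary_box_iff_rho_le {q n s k : ℕ} (hq : 2 ≤ q) (hk : k ≤ n * s)
    (ξ : Fin n → Fin s → ℕ) (hξ : ∀ j i, ξ j i < q) (X : Fin n → ℝ)
    (hX : ∀ j, X j = ∑ i : Fin s, (ξ j i : ℝ) * (q : ℝ) ^ ((i : ℤ) + 1 - s - 1)) :
    (∃ A : Fin n → ℕ, (∀ j, A j ≤ s) ∧ (∑ j, A j) = k ∧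
        ∀ j, X j < (q : ℝ) ^ (-(A j : ℤ))) ↔
      (∑ j, rhoDig (ξ j)) ≤ n * s - k := by
  obtain ⟨M, hM⟩ : ∃ M, n * s = M := ⟨_, rfl⟩
  rw [hM] at hk ⊢
  have hq0 : (q : ℝ) ≠ 0 := by positivity
  have hqpos : (0 : ℝ) < q := by positivity
  -- X j = N j / q^s
  set N : Fin n → ℕ := fun j => ∑ i : Fin s, ξ j i * q ^ i.1 with hN
  have hX' : ∀ j, X j = (N j : ℝ) / (q : ℝ) ^ s := by
    intro j
    rw [hX j, hN]
    push_cast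
    rw [Finset.sum_div]
    refine Finset.sum_congr rfl fun i _ => ?_
    have he : ((i : ℤ) + 1 - s - 1) = (i : ℤ) - s := by ring
    rw [he, zpow_sub₀ hq0, zpow_natCast, zpow_natCast, mul_div_assoc]
  -- per-coordinate key iff
  have key : ∀ (j : Fin n) (a : ℕ), a ≤ s →
      (X j < (q : ℝ) ^ (-(a : ℤ)) ↔ rhoDig (ξ j) ≤ s - a) := by
    intro j a ha
    rw [hX', div_lt_iff₀ (by positivity)]
    have hcast : (q : ℝ) ^ (-(a : ℤ)) * (q : ℝ) ^ s = ((q ^ (s - a) : ℕ) : ℝ) := by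
      push_cast
      rw [← zpow_natCast (q : ℝ) s, ← zpow_add₀ hq0,
        ← zpow_natCast (q : ℝ) (s - a)]
      congr 1
      omega
    rw [hcast, Nat.cast_lt]
    exact nat_key hq (ξ j) (hξ j)
  have hrho_le : ∀ j, rhoDig (ξ j) ≤ s := fun j => rhoDig_le_s _
  have h1 : ∑ j, (s - rhoDig (ξ j)) + ∑ j, rhoDig (ξ j) = M := by
    rw [← hM, ← Finset.sum_add_distrib]
    have : ∀ j : Fin n, (s - rhoDig (ξ j)) + rhoDig (ξ j) = s :=
      fun j => Nat.sub_add_cancel (hrho_le j)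
    simp [this, mul_comm]
  rw [Nat.le_sub_iff_add_le hk]
  constructor
  · rintro ⟨A, hAs, hAk, hAX⟩
    have hle : ∀ j, A j ≤ s - rhoDig (ξ j) := by
      intro j
      have hk1 := (key j (A j) (hAs j)).1 (hAX j)
      have hk2 := hrho_le j
      have hk3 := hAs j
      omega
    have : k ≤ ∑ j, (s - rhoDig (ξ j)) := by
      rw [← hAk]; exact Finset.sum_le_sum fun j _ => hle j
    omega
  · intro h
    obtain ⟨A, hA, hAk⟩ := exists_le_sum (fun j => s - rhoDig (ξ j)) k
      (show k ≤ ∑ j, (s - rhoDig (ξ j)) by omega)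
    refine ⟨A, fun j => le_trans (hA j) (Nat.sub_le _ _), hAk, fun j => ?_⟩
    have h1 := hA j
    have h2 := hrho_le j
    exact (key j (A j) (by omega)).2 (by omega)
end

section
/- Every (δ,s,n)-net in base p^e is a (δ', es, n)-net in base p, where δ' = eδ + (e-1)(n-1). -/
/-- The number of points of `D` in the elementary box
`Π_j [m_j / b^{a_j}, (m_j + 1) / b^{a_j})`. -/
noncomputable def boxCount {n : ℕ} (b : ℕ) (D : Finset (Fin n → ℝ))
    (A m : Fin n → ℕ) : ℕ :=
  (D.filter fun X => ∀ j, (m j : ℝ) / (b : ℝ) ^ (A j) ≤ X j ∧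
    X j < ((m j : ℝ) + 1) / (b : ℝ) ^ (A j)).card

/-- `D` is a `(δ,s,n)`-net in base `b`: `D` consists of `b^s` points of `[0,1)^n`
and every elementary box of volume `b^{δ-s}` contains exactly `b^δ` points of `D`. -/
def IsNet {n : ℕ} (b δ s : ℕ) (D : Finset (Fin n → ℝ)) : Prop :=
  δ ≤ s ∧ D.card = b ^ s ∧ (∀ X ∈ D, ∀ j, 0 ≤ X j ∧ X j < 1) ∧
    ∀ A m : Fin n → ℕ, (∑ j, A j) + δ = s → (∀ j, m j < b ^ (A j)) →
      boxCount b D A m = b ^ δ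

/-! Round each exponent `A_j` of an elementary `p`-box up to a multiple `e a_j`, enlarging one
of them further so that `∑ a_j + δ = s`; the slack `(e - 1)(n - 1)` in the new strength is what
makes this possible. The box is then the disjoint union of `p ^ ∑ (e a_j - A_j)` boxes with
exponents `e a_j`, i.e. elementary `p^e`-boxes of volume `(p^e)^(δ - s)`, each holding
`(p^e)^δ` points. -/

open Finset

section ElementaryBoxes

variable {b : ℕ}

theorem div_pow_le_and_lt_iff_floor_eq (hb : 0 < b) (a m : ℕ) (x : ℝ) :
    ((m : ℝ) / (b : ℝ) ^ a ≤ x ∧ x < ((m : ℝ) + 1) / (b : ℝ) ^ a) ↔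
      0 ≤ x ∧ ⌊x * (b : ℝ) ^ a⌋₊ = m := by
  have hba : (0 : ℝ) < (b : ℝ) ^ a := by positivity
  rw [div_le_iff₀ hba, lt_div_iff₀ hba]
  constructor
  · rintro ⟨hle, hlt⟩
    have hx : 0 ≤ x := nonneg_of_mul_nonneg_left ((Nat.cast_nonneg m).trans hle) hba
    exact ⟨hx, (Nat.floor_eq_iff (by positivity)).2 ⟨hle, hlt⟩⟩
  · rintro ⟨hx, hfloor⟩
    exact (Nat.floor_eq_iff (by positivity)).1 hfloor

theorem floor_mul_pow_div_pow (hb : 0 < b) {a c : ℕ} (hac : a ≤ c) (x : ℝ) :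
    ⌊x * (b : ℝ) ^ c⌋₊ / b ^ (c - a) = ⌊x * (b : ℝ) ^ a⌋₊ := by
  have hpow : (b : ℝ) ^ c = (b : ℝ) ^ a * (b : ℝ) ^ (c - a) := by
    rw [← pow_add, Nat.add_sub_cancel' hac]
  rw [← Nat.floor_div_natCast, Nat.cast_pow, hpow, ← mul_assoc,
    mul_div_cancel_right₀ _ (by positivity)]

theorem boxCount_pow_base (p e : ℕ) {n : ℕ} (D : Finset (Fin n → ℝ)) (a m : Fin n → ℕ) :
    boxCount p D (fun j => e * a j) m = boxCount (p ^ e) D a m := by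
  simp only [boxCount, Nat.cast_pow, pow_mul]

theorem div_pow_le_and_lt_iff_floor_mul_pow_eq (hb : 0 < b) {a c : ℕ} (hac : a ≤ c)
    (m k : ℕ) (hk : k < b ^ (c - a)) (x : ℝ) :
    ((m : ℝ) / (b : ℝ) ^ a ≤ x ∧ x < ((m : ℝ) + 1) / (b : ℝ) ^ a) ∧
        ⌊x * (b : ℝ) ^ c⌋₊ % b ^ (c - a) = k ↔
      ((((k + b ^ (c - a) * m : ℕ) : ℝ) / (b : ℝ) ^ c ≤ x ∧
        x < (((k + b ^ (c - a) * m : ℕ) : ℝ) + 1) / (b : ℝ) ^ c)) := by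
  rw [div_pow_le_and_lt_iff_floor_eq hb, div_pow_le_and_lt_iff_floor_eq hb, and_assoc,
    ← floor_mul_pow_div_pow hb hac, Nat.div_mod_unique (by positivity)]
  simp only [hk, and_true, eq_comm]

theorem boxCount_eq_sum_boxCount_of_le (hb : 0 < b) {n : ℕ} (D : Finset (Fin n → ℝ))
    {A c : Fin n → ℕ} (hAc : ∀ j, A j ≤ c j) (m : Fin n → ℕ) :
    boxCount b D A m = ∑ k ∈ Fintype.piFinset fun j => range (b ^ (c j - A j)),
      boxCount b D c fun j => k j + b ^ (c j - A j) * m j := by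
  classical
  -- a point of the `A`-box lies in the `c`-box whose `j`-th index is `k j` modulo `b ^ (c j - A j)`
  rw [boxCount, card_eq_sum_card_fiberwise
    (f := fun X j => ⌊X j * (b : ℝ) ^ c j⌋₊ % b ^ (c j - A j))]
  · refine sum_congr rfl fun k hk => ?_
    rw [Fintype.mem_piFinset] at hk
    rw [boxCount, filter_filter]
    congr 1
    refine filter_congr fun X _ => ?_
    rw [funext_iff, ← forall_and]
    exact forall_congr' fun j => by
      simpa using div_pow_le_and_lt_iff_floor_mul_pow_eq hb (hAc j) (m j) (k j)
        (mem_range.1 (hk j)) (X j)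
  · intro X _
    simpa using fun j => Nat.mod_lt _ (by positivity)

theorem add_pow_sub_mul_lt_pow {a c m k : ℕ} (hac : a ≤ c) (hm : m < b ^ a)
    (hk : k < b ^ (c - a)) : k + b ^ (c - a) * m < b ^ c :=
  calc k + b ^ (c - a) * m < b ^ (c - a) * (m + 1) := by rw [mul_add_one]; omega
    _ ≤ b ^ (c - a) * b ^ a := Nat.mul_le_mul_left _ hm
    _ = b ^ c := by rw [← pow_add, Nat.sub_add_cancel hac]

theorem boxCount_eq_of_le (hb : 0 < b) {n : ℕ} (D : Finset (Fin n → ℝ))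
    {A c m : Fin n → ℕ} (hAc : ∀ j, A j ≤ c j) (hm : ∀ j, m j < b ^ A j) {N : ℕ}
    (hN : ∀ m' : Fin n → ℕ, (∀ j, m' j < b ^ c j) → boxCount b D c m' = N) :
    boxCount b D A m = b ^ (∑ j, (c j - A j)) * N := by
  classical
  rw [boxCount_eq_sum_boxCount_of_le hb D hAc m, sum_congr rfl fun k hk => hN _ fun j =>
    add_pow_sub_mul_lt_pow (hAc j) (hm j) (mem_range.1 (Fintype.mem_piFinset.1 hk j)),
    sum_const, smul_eq_mul, Fintype.card_piFinset]
  simp only [card_range, prod_pow_eq_pow_sum]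

end ElementaryBoxes

section Exponents

variable {ι : Type*} [Fintype ι]

theorem exists_le_sum_eq [Nonempty ι] (r : ι → ℕ) {t : ℕ} (h : ∑ j, r j ≤ t) :
    ∃ a : ι → ℕ, (∀ j, r j ≤ a j) ∧ ∑ j, a j = t := by
  classical
  obtain ⟨j₀⟩ := ‹Nonempty ι›
  refine ⟨r + Pi.single j₀ (t - ∑ j, r j), fun j => Nat.le_add_right _ _, ?_⟩
  simp only [Pi.add_apply, sum_add_distrib, sum_pi_single', mem_univ, if_true]
  omega

theorem mul_sum_ceilDiv_le (e : ℕ) (A : ι → ℕ) :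
    e * ∑ j, A j ⌈/⌉ e ≤ ∑ j, A j + Fintype.card ι * (e - 1) := by
  calc e * ∑ j, A j ⌈/⌉ e = ∑ j, e * ((A j + e - 1) / e) := by
        simp only [mul_sum, Nat.ceilDiv_eq_add_pred_div]
    _ ≤ ∑ j, (A j + (e - 1)) := sum_le_sum fun j _ => (Nat.mul_div_le _ _).trans (by omega)
    _ = ∑ j, A j + Fintype.card ι * (e - 1) := by
        rw [sum_add_distrib, sum_const, card_univ, smul_eq_mul]

theorem exists_le_mul_and_sum_add_eq {e δ s : ℕ} (he : 1 ≤ e) (A : ι → ℕ)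
    (hA : ∑ j, A j + (e * δ + (e - 1) * (Fintype.card ι - 1)) = e * s) :
    ∃ a : ι → ℕ, (∀ j, A j ≤ e * a j) ∧ ∑ j, a j + δ = s := by
  cases isEmpty_or_nonempty ι with
  | inl _ =>
    simp only [univ_eq_empty, sum_empty, Fintype.card_of_isEmpty, zero_tsub, mul_zero,
      add_zero, zero_add] at hA
    exact ⟨0, fun j => isEmptyElim j, by simp [Nat.eq_of_mul_eq_mul_left he hA]⟩
  | inr _ =>
    have hcard : Fintype.card ι * (e - 1) = (e - 1) * (Fintype.card ι - 1) + (e - 1) := by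
      have := Fintype.card_pos (α := ι)
      rw [mul_comm, ← Nat.mul_succ]
      congr 1
      omega
    have hsum : ∑ j, A j ⌈/⌉ e + δ ≤ s := by
      have := mul_sum_ceilDiv_le e A
      refine Nat.le_of_lt_succ (Nat.lt_of_mul_lt_mul_left (a := e) ?_)
      rw [mul_add, Nat.mul_succ]
      omega
    obtain ⟨a, hra, ha⟩ := exists_le_sum_eq (fun j => A j ⌈/⌉ e) (Nat.le_sub_of_add_le hsum)
    refine ⟨a, fun j => ?_, by omega⟩
    exact (ceilDiv_le_iff_le_mul he).1 (hra j)

end Exponents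

theorem net_base_reduction {n p e δ s : ℕ} (hp : p.Prime) (he : 1 ≤ e)
    (D : Finset (Fin n → ℝ)) (hD : IsNet (p ^ e) δ s D)
    (hδ' : e * δ + (e - 1) * (n - 1) ≤ e * s) :
    IsNet p (e * δ + (e - 1) * (n - 1)) (e * s) D := by
  obtain ⟨-, hcard, hmem, hbox⟩ := hD
  refine ⟨hδ', by rw [hcard, ← pow_mul], hmem, fun A m hA hm => ?_⟩
  obtain ⟨a, hAa, ha⟩ := exists_le_mul_and_sum_add_eq he A (by rwa [Fintype.card_fin])
  have hfine : ∀ m' : Fin n → ℕ, (∀ j, m' j < p ^ (e * a j)) →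
      boxCount p D (fun j => e * a j) m' = p ^ (e * δ) := fun m' hm' => by
    rw [boxCount_pow_base, hbox a m' ha fun j => by rw [← pow_mul]; exact hm' j, pow_mul]
  rw [boxCount_eq_of_le hp.pos D hAa hm hfine, ← pow_add, sum_tsub_distrib _ fun j _ => hAa j,
    ← mul_sum]
  have : e * s = e * ∑ j, a j + e * δ := by rw [← ha, mul_add]
  congr 1
  omega
end

section
/- Let D, D^⊥ ⊆ Q^n(q^s) be mutually dual linear distributions of dimensions d and ns - d. For 0 ≤ δ ≤ d, the following are equivalent: (i) every elementary box in E_s(q,n) of volume q^{δ-d} contains exactly q^δ points of D; (ii) the minimum nonzero ρ-weight of D^⊥ is at least d - δ + 1. -/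
/-- The inner product `⟨X,Y⟩ = Σ_j Σ_i ξ_i(x_j)·ξ_{s+1-i}(y_j)` on the space of digit
arrays, pairing the digits of each coordinate in reversed order. -/
def rtInner {F : Type*} [Field F] {n s : ℕ} (Ω₁ Ω₂ : Matrix (Fin n) (Fin s) F) : F :=
  ∑ j, ∑ i, Ω₁ j i * Ω₂ j i.rev

/-- The dual of a linear distribution with respect to `rtInner`. -/
def dualCode {F : Type*} [Field F] {n s : ℕ}
    (C : Submodule F (Matrix (Fin n) (Fin s) F)) :
    Submodule F (Matrix (Fin n) (Fin s) F) where
  carrier := {Ω' | ∀ Ω ∈ C, rtInner Ω Ω' = 0}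
  zero_mem' := by intro Ω hΩ; simp [rtInner]
  add_mem' := by
    intro a b ha hb Ω hΩ
    have : rtInner Ω (a + b) = rtInner Ω a + rtInner Ω b := by
      simp [rtInner, Matrix.add_apply, mul_add, Finset.sum_add_distrib]
    rw [this, ha Ω hΩ, hb Ω hΩ, add_zero]
  smul_mem' := by
    intro c a ha Ω hΩ
    have : rtInner Ω (c • a) = c * rtInner Ω a := by
      simp only [rtInner, Matrix.smul_apply, smul_eq_mul, Finset.mul_sum]
      exact Finset.sum_congr rfl fun j _ => Finset.sum_congr rfl fun i _ => by ring
    rw [this, ha Ω hΩ, mul_zero]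

/-!
A box of volume `q^(δ-d)` with sides `q^(-A_j)`, `∑ A_j = d - δ`, consists of the points whose
top `A_j` digits in coordinate `j` are prescribed, i.e. it is a fibre of the linear projection
`π_A` onto those digit positions. The fibres of `π_A` restricted to `D` are cosets of its kernel,
so every box holds exactly `q^δ` points of `D` iff `π_A` maps `D` onto the range of `π_A`, i.e.
iff `D + ker π_A` is the whole space. For the nondegenerate form `rtInner` this means
`D^⊥ ∩ (ker π_A)^⊥ = 0`, and because the form reverses the digit order, `(ker π_A)^⊥` consists
of the arrays whose `j`-th row has `ρ`-weight at most `A_j`. A nonzero dual array of weight at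
most `d - δ` is caught by such an `A` after padding its row weights up to total `d - δ`.
-/

theorem LinearMap.card_fiber_eq_card_ker {R V W : Type*} [Ring R] [AddCommGroup V] [Module R V]
    [AddCommGroup W] [Module R W] (g : V →ₗ[R] W) {y : W} (hy : y ∈ range g) :
    Nat.card {x // g x = y} = Nat.card (ker g) := by
  obtain ⟨x₀, rfl⟩ := hy
  exact Nat.card_congr
    { toFun x := ⟨x - x₀, by simp [x.2]⟩
      invFun x := ⟨x + x₀, by simp [mem_ker.mp x.2]⟩
      left_inv x := by simp
      right_inv x := by simp }

section FiniteField

variable {K V W : Type*} [Field K] [AddCommGroup V] [Module K V] [AddCommGroup W] [Module K W]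

theorem LinearMap.card_eq_card_ker_mul_card_range [Finite V] (g : V →ₗ[K] W) :
    Nat.card V = Nat.card (ker g) * Nat.card (range g) := by
  rw [Module.natCard_eq_pow_finrank (K := K), Module.natCard_eq_pow_finrank (K := K) (V := ker g),
    Module.natCard_eq_pow_finrank (K := K) (V := range g), ← pow_add, add_comm,
    finrank_range_add_finrank_ker]

theorem LinearMap.forall_card_fiber_eq_iff_range_eq [Finite V] (g : V →ₗ[K] W)
    {S : Submodule K W} (hS : range g ≤ S) {c : ℕ} (hc : c ≠ 0)
    (hV : Nat.card V = Nat.card S * c) :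
    (∀ y ∈ S, Nat.card {x // g x = y} = c) ↔ range g = S := by
  constructor
  · refine fun h => hS.antisymm fun y hy => ?_
    obtain ⟨x, hx⟩ : Nonempty {x // g x = y} := (Nat.card_ne_zero.mp (h y hy ▸ hc)).1
    exact ⟨x, hx⟩
  · rintro rfl y hy
    have hrange : Nat.card (range g) ≠ 0 := left_ne_zero_of_mul (hV ▸ Nat.card_pos.ne')
    rw [card_fiber_eq_card_ker g hy]
    rw [card_eq_card_ker_mul_card_range g, mul_comm] at hV
    exact Nat.eq_of_mul_eq_mul_left (Nat.pos_of_ne_zero hrange) hV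

end FiniteField

theorem Submodule.map_eq_range_iff_sup_ker_eq_top {R M N : Type*} [Ring R] [AddCommGroup M]
    [Module R M] [AddCommGroup N] [Module R N] (f : M →ₗ[R] N) (D : Submodule R M) :
    D.map f = LinearMap.range f ↔ D ⊔ LinearMap.ker f = ⊤ := by
  rw [LinearMap.range_eq_map, le_antisymm_iff, and_iff_right (map_mono le_top),
    LinearMap.map_le_map_iff, top_le_iff]

namespace LinearMap.BilinForm

variable {K V : Type*} [Field K] [AddCommGroup V] [Module K V] {B : LinearMap.BilinForm K V}

theorem orthogonal_sup (S U : Submodule K V) :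
    B.orthogonal (S ⊔ U) = B.orthogonal S ⊓ B.orthogonal U := by
  refine le_antisymm (le_inf (orthogonal_le le_sup_left) (orthogonal_le le_sup_right)) ?_
  rintro x ⟨hS, hU⟩ y hy
  obtain ⟨y₁, hy₁, y₂, hy₂, rfl⟩ := Submodule.mem_sup.mp hy
  have h₁ : B y₁ x = 0 := hS y₁ hy₁
  have h₂ : B y₂ x = 0 := hU y₂ hy₂
  show B (y₁ + y₂) x = 0
  rw [map_add, LinearMap.add_apply, h₁, h₂, add_zero]

theorem orthogonal_eq_bot_iff_eq_top [FiniteDimensional K V] (hB : B.Nondegenerate)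
    {S : Submodule K V} : B.orthogonal S = ⊥ ↔ S = ⊤ := by
  rw [← Submodule.finrank_eq_zero, finrank_orthogonal hB, Nat.sub_eq_zero_iff_le]
  exact ⟨fun h => Submodule.eq_top_of_finrank_eq ((Submodule.finrank_le S).antisymm h),
    fun h => h ▸ finrank_top K V ▸ le_rfl⟩

theorem orthogonal_inf_orthogonal_eq_bot_iff [FiniteDimensional K V] (hB : B.Nondegenerate)
    (S U : Submodule K V) : B.orthogonal S ⊓ B.orthogonal U = ⊥ ↔ S ⊔ U = ⊤ := by
  rw [← orthogonal_sup, orthogonal_eq_bot_iff_eq_top hB]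

end LinearMap.BilinForm

theorem Fintype.exists_ge_bounded_sum_eq {ι : Type*} [Fintype ι] {B : ι → ℕ} {s k : ℕ}
    (hB : ∀ i, B i ≤ s) (hBk : ∑ i, B i ≤ k) (hk : k ≤ Fintype.card ι * s) :
    ∃ A : ι → ℕ, B ≤ A ∧ (∀ i, A i ≤ s) ∧ ∑ i, A i = k := by
  classical
  induction h : k - ∑ i, B i generalizing B with
  | zero => exact ⟨B, le_rfl, hB, by omega⟩
  | succ t ih =>
    obtain ⟨i₀, hi₀⟩ : ∃ i, B i < s := by
      by_contra! hs
      have := Finset.sum_le_sum fun i (_ : i ∈ Finset.univ) => hs i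
      simp only [Finset.sum_const, Finset.card_univ, smul_eq_mul] at this
      omega
    have hsum : ∑ i, (B + Pi.single i₀ 1 : ι → ℕ) i = ∑ i, B i + 1 := by
      simp [Finset.sum_add_distrib]
    obtain ⟨A, hBA, hA, hAk⟩ := ih (B := B + Pi.single i₀ 1)
      (fun i => by
        rcases eq_or_ne i i₀ with rfl | hi
        · simpa using hi₀
        · simpa [hi] using hB i)
      (by omega) (by omega)
    exact ⟨A, le_trans le_self_add hBA, hA, hAk⟩

theorem Nat.div_pow_eq_div_pow_iff {b s k N N' : ℕ} (hb : 0 < b) (hN : N < b ^ s)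
    (hN' : N' < b ^ s) :
    N / b ^ k = N' / b ^ k ↔ ∀ i, k ≤ i → i < s → N / b ^ i % b = N' / b ^ i % b := by
  have hdiv : ∀ M i, M / b ^ k / b ^ i = M / b ^ (k + i) := fun M i => by
    rw [Nat.div_div_eq_div_mul, ← pow_add]
  constructor
  · intro h i hki _
    obtain ⟨t, rfl⟩ := Nat.exists_eq_add_of_le hki
    rw [← hdiv, ← hdiv, h]
  · intro h
    have hlt : ∀ M < b ^ s, M / b ^ k < b ^ (s - k) := fun M hM =>
      Nat.div_lt_of_lt_mul (hM.trans_le (by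
        rw [← pow_add]; exact Nat.pow_le_pow_right hb (by omega)))
    suffices (⟨N / b ^ k, hlt N hN⟩ : Fin (b ^ (s - k))) = ⟨N' / b ^ k, hlt N' hN'⟩ from
      congrArg Fin.val this
    refine finFunctionFinEquiv.symm.injective (funext fun t => Fin.ext ?_)
    simp only [finFunctionFinEquiv_symm_apply_val, hdiv]
    exact h _ (Nat.le_add_right k t) (by omega)

theorem Nat.cast_div_pow_bounds_iff {q s a : ℕ} (hq : 0 < q) (ha : a ≤ s) (N m : ℕ) :
    ((m : ℝ) / (q : ℝ) ^ a ≤ N / (q : ℝ) ^ s ∧ (N : ℝ) / (q : ℝ) ^ s < ((m : ℝ) + 1) / (q : ℝ) ^ a)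
      ↔ N / q ^ (s - a) = m := by
  have hqa : (0 : ℝ) < (q : ℝ) ^ a := pow_pos (Nat.cast_pos.mpr hq) a
  have hs : (q : ℝ) ^ s = (q : ℝ) ^ (s - a) * (q : ℝ) ^ a := by
    rw [← pow_add, Nat.sub_add_cancel ha]
  rw [hs, div_le_div_iff₀ hqa (by positivity), div_lt_div_iff₀ (by positivity) hqa, ← mul_assoc,
    mul_le_mul_iff_of_pos_right hqa, ← mul_assoc, mul_lt_mul_iff_of_pos_right hqa]
  norm_cast
  refine ⟨fun h => Nat.div_eq_of_lt_le h.1 h.2, ?_⟩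
  rintro rfl
  exact ⟨Nat.div_mul_le_self _ _, by rw [add_one_mul]; exact Nat.lt_div_mul_add (pow_pos hq _)⟩

namespace RTSpace

variable {F : Type*} {q n s : ℕ}

def rowValue (φ : F ≃ Fin q) (ω : Fin s → F) : ℕ :=
  finFunctionFinEquiv fun i => φ (ω i)

theorem rowValue_lt (φ : F ≃ Fin q) (ω : Fin s → F) : rowValue φ ω < q ^ s :=
  (finFunctionFinEquiv _).isLt

theorem rowValue_div_pow_mod (φ : F ≃ Fin q) (ω : Fin s → F) (i : Fin s) :
    rowValue φ ω / q ^ (i : ℕ) % q = φ (ω i) := by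
  simpa [rowValue] using
    (finFunctionFinEquiv_symm_apply_val (finFunctionFinEquiv fun i => φ (ω i)) i).symm

variable [Field F]

theorem rowValue_div_pow_eq_iff (φ : F ≃ Fin q) (ω ω' : Fin s → F) (k : ℕ) :
    rowValue φ ω / q ^ k = rowValue φ ω' / q ^ k ↔ ∀ i : Fin s, k ≤ i → ω i = ω' i := by
  rw [Nat.div_pow_eq_div_pow_iff (φ 0).pos (rowValue_lt φ ω) (rowValue_lt φ ω')]
  constructor
  · intro h i hi
    have := h i hi i.isLt
    rwa [rowValue_div_pow_mod, rowValue_div_pow_mod, Fin.val_inj, φ.apply_eq_iff_eq] at this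
  · intro h i hki his
    rw [rowValue_div_pow_mod φ ω ⟨i, his⟩, rowValue_div_pow_mod φ ω' ⟨i, his⟩, h ⟨i, his⟩ hki]

theorem coordOf_eq (φ : F ≃ Fin q) (Ω : Matrix (Fin n) (Fin s) F) (j : Fin n) :
    coordOf φ Ω j = rowValue φ (Ω j) / (q : ℝ) ^ s := by
  have hq : (q : ℝ) ≠ 0 := Nat.cast_ne_zero.mpr (φ 0).pos.ne'
  simp only [coordOf, rowValue, finFunctionFinEquiv_apply, Nat.cast_sum, Nat.cast_mul,
    Nat.cast_pow, Finset.sum_div]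
  refine Finset.sum_congr rfl fun i _ => ?_
  rw [show (i : ℤ) + 1 - s - 1 = (i : ℕ) - (s : ℕ) by ring, zpow_sub₀ hq, zpow_natCast,
    zpow_natCast, mul_div_assoc]

def topProj (A : Fin n → ℕ) : Matrix (Fin n) (Fin s) F →ₗ[F] Matrix (Fin n) (Fin s) F where
  toFun Ω := Matrix.of fun j i => if s - A j ≤ (i : ℕ) then Ω j i else 0
  map_add' X Y := by ext j i; simp only [Matrix.of_apply, Matrix.add_apply]; split_ifs <;> simp
  map_smul' c X := by ext j i; simp only [Matrix.of_apply, Matrix.smul_apply]; split_ifs <;> simp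

variable {A : Fin n → ℕ}

theorem topProj_apply (Ω : Matrix (Fin n) (Fin s) F) (j : Fin n) (i : Fin s) :
    topProj A Ω j i = if s - A j ≤ (i : ℕ) then Ω j i else 0 := rfl

theorem topProj_eq_iff {Ω Ω' : Matrix (Fin n) (Fin s) F} :
    topProj A Ω = topProj A Ω' ↔ ∀ j, ∀ i : Fin s, s - A j ≤ i → Ω j i = Ω' j i := by
  rw [← Matrix.ext_iff]
  refine forall_congr' fun j => forall_congr' fun i => ?_
  by_cases h : s - A j ≤ (i : ℕ) <;> simp [topProj_apply, h]

theorem topProj_topProj (Ω : Matrix (Fin n) (Fin s) F) : topProj A (topProj A Ω) = topProj A Ω :=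
  topProj_eq_iff.mpr fun j i h => by simp [topProj_apply, h]

/-- The index `m_j` of the interval `[m_j / q ^ A_j, (m_j + 1) / q ^ A_j)` containing the `j`-th
coordinate; it only depends on the top `A j` digits, those kept by `topProj A`. -/
def boxIndex (φ : F ≃ Fin q) (A : Fin n → ℕ) (Ω : Matrix (Fin n) (Fin s) F) : Fin n → ℕ :=
  fun j => rowValue φ (Ω j) / q ^ (s - A j)

theorem forall_mem_box_iff_boxIndex_eq (φ : F ≃ Fin q) (hA : ∀ j, A j ≤ s)
    (Ω : Matrix (Fin n) (Fin s) F) (m : Fin n → ℕ) :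
    (∀ j, (m j : ℝ) / (q : ℝ) ^ (A j) ≤ coordOf φ Ω j ∧
        coordOf φ Ω j < ((m j : ℝ) + 1) / (q : ℝ) ^ (A j)) ↔ boxIndex φ A Ω = m := by
  rw [funext_iff]
  refine forall_congr' fun j => ?_
  rw [coordOf_eq]
  exact Nat.cast_div_pow_bounds_iff (φ 0).pos (hA j) _ _

theorem boxIndex_eq_iff (φ : F ≃ Fin q) {Ω Ω' : Matrix (Fin n) (Fin s) F} :
    boxIndex φ A Ω = boxIndex φ A Ω' ↔ topProj A Ω = topProj A Ω' := by
  rw [funext_iff, topProj_eq_iff]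
  exact forall_congr' fun j => rowValue_div_pow_eq_iff φ (Ω j) (Ω' j) _

theorem boxIndex_topProj (φ : F ≃ Fin q) (Ω : Matrix (Fin n) (Fin s) F) :
    boxIndex φ A (topProj A Ω) = boxIndex φ A Ω :=
  (boxIndex_eq_iff φ).mpr (topProj_topProj Ω)

theorem boxIndex_lt (φ : F ≃ Fin q) (Ω : Matrix (Fin n) (Fin s) F) (j : Fin n) :
    boxIndex φ A Ω j < q ^ A j :=
  Nat.div_lt_of_lt_mul ((rowValue_lt φ (Ω j)).trans_le (by
    rw [← pow_add]; exact Nat.pow_le_pow_right (φ 0).pos (by omega)))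

theorem exists_boxIndex_eq (φ : F ≃ Fin q) (hA : ∀ j, A j ≤ s) {m : Fin n → ℕ}
    (hm : ∀ j, m j < q ^ A j) : ∃ Ω : Matrix (Fin n) (Fin s) F, boxIndex φ A Ω = m := by
  have hq := (φ 0).pos
  have hlt : ∀ j, m j * q ^ (s - A j) < q ^ s := fun j => by
    calc m j * q ^ (s - A j) < q ^ A j * q ^ (s - A j) :=
          Nat.mul_lt_mul_of_pos_right (hm j) (pow_pos hq _)
      _ = q ^ s := by rw [← pow_add, Nat.add_sub_cancel' (hA j)]
  refine ⟨Matrix.of fun j i => φ.symm (finFunctionFinEquiv.symm ⟨_, hlt j⟩ i), funext fun j => ?_⟩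
  simp [boxIndex, rowValue, Nat.mul_div_cancel _ (pow_pos hq _)]

theorem card_range_topProj (φ : F ≃ Fin q) (hA : ∀ j, A j ≤ s) :
    Nat.card (topProj (F := F) (s := s) A).range = q ^ ∑ j, A j := by
  have hbij : Function.Bijective fun (y : (topProj (F := F) (s := s) A).range) j =>
      (⟨boxIndex φ A (y : Matrix (Fin n) (Fin s) F) j, boxIndex_lt φ _ j⟩ : Fin (q ^ A j)) := by
    constructor
    · rintro ⟨_, Ω, rfl⟩ ⟨_, Ω', rfl⟩ h
      have : boxIndex φ A (topProj A Ω) = boxIndex φ A (topProj A Ω') :=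
        funext fun j => congrArg Fin.val (congrFun h j)
      simp only [boxIndex_topProj, boxIndex_eq_iff] at this
      exact Subtype.ext this
    · intro m
      obtain ⟨Ω, hΩ⟩ := exists_boxIndex_eq φ hA fun j => (m j).isLt
      exact ⟨⟨topProj A Ω, Ω, rfl⟩, funext fun j => Fin.ext (by simp [boxIndex_topProj, hΩ])⟩
  rw [Nat.card_eq_of_bijective _ hbij, Nat.card_pi]
  simp [Finset.prod_pow_eq_pow_sum]

theorem forall_card_boxIndex_eq_iff [Finite F] (φ : F ≃ Fin q) (hA : ∀ j, A j ≤ s)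
    (D : Submodule F (Matrix (Fin n) (Fin s) F)) {δ : ℕ}
    (hD : Nat.card D = q ^ (∑ j, A j + δ)) :
    (∀ m : Fin n → ℕ, (∀ j, m j < q ^ A j) →
        Nat.card {Ω : Matrix (Fin n) (Fin s) F // Ω ∈ D ∧ boxIndex φ A Ω = m} = q ^ δ) ↔
      D.map (topProj A) = (topProj A).range := by
  have hfibers := LinearMap.forall_card_fiber_eq_iff_range_eq ((topProj A).domRestrict D)
    (LinearMap.range_domRestrict_le_range _ _) (pow_pos (φ 0).pos δ).ne'
    (by rw [hD, card_range_topProj φ hA, pow_add])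
  rw [LinearMap.range_domRestrict] at hfibers
  rw [← hfibers]
  have hfiber : ∀ Ω₀ : Matrix (Fin n) (Fin s) F,
      Nat.card {Ω // Ω ∈ D ∧ boxIndex φ A Ω = boxIndex φ A Ω₀} =
        Nat.card {x : D // (topProj A).domRestrict D x = topProj A Ω₀} := fun Ω₀ => by
    rw [← Nat.card_congr (Equiv.subtypeSubtypeEquivSubtypeInter (· ∈ D) _)]
    simp [boxIndex_eq_iff]
  constructor
  · rintro h _ ⟨Ω₀, rfl⟩
    rw [← hfiber]
    exact h _ (boxIndex_lt φ Ω₀)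
  · intro h m hm
    obtain ⟨Ω₀, rfl⟩ := exists_boxIndex_eq φ hA hm
    rw [hfiber]
    exact h _ ⟨Ω₀, rfl⟩

variable (F n s) in
def rtForm : LinearMap.BilinForm F (Matrix (Fin n) (Fin s) F) :=
  LinearMap.mk₂ F rtInner
    (fun X X' Y => by simp only [rtInner, Matrix.add_apply, add_mul, Finset.sum_add_distrib])
    (fun c X Y => by simp only [rtInner, Matrix.smul_apply, smul_eq_mul, Finset.mul_sum, mul_assoc])
    (fun X Y Y' => by simp only [rtInner, Matrix.add_apply, mul_add, Finset.sum_add_distrib])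
    (fun c X Y => by
      simp only [rtInner, Matrix.smul_apply, smul_eq_mul, Finset.mul_sum, mul_left_comm])

theorem rtForm_apply (X Y : Matrix (Fin n) (Fin s) F) : rtForm F n s X Y = rtInner X Y := rfl

theorem dualCode_eq_orthogonal (D : Submodule F (Matrix (Fin n) (Fin s) F)) :
    dualCode D = (rtForm F n s).orthogonal D := rfl

theorem rtInner_single_left (j : Fin n) (k : Fin s) (c : F) (X : Matrix (Fin n) (Fin s) F) :
    rtInner (Matrix.single j k c) X = c * X j k.rev := by
  simp [rtInner, Matrix.single_apply, ite_and]

theorem rtForm_nondegenerate : (rtForm F n s).Nondegenerate :=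
  .ofSeparatingRight fun X hX => Matrix.ext fun j i => by
    simpa [rtForm_apply, rtInner_single_left] using hX (Matrix.single j i.rev 1)

theorem rhoRow_le_iff [DecidableEq F] {ω : Fin s → F} {a : ℕ} :
    rhoRow ω ≤ a ↔ ∀ i : Fin s, a ≤ i → ω i = 0 := by
  simp only [rhoRow, Finset.sup_le_iff, Finset.mem_filter, Finset.mem_univ, true_and]
  exact forall_congr' fun i => by rw [← not_imp_not, not_not, not_le, Nat.lt_add_one_iff]

theorem rhoRow_le [DecidableEq F] (ω : Fin s → F) : rhoRow ω ≤ s :=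
  Finset.sup_le fun i _ => i.isLt

/- `rtInner` pairs position `i` with `s - 1 - i`, so being orthogonal to every array that
vanishes on the top `A j` positions of row `j` kills exactly the positions `≥ A j`. -/
theorem mem_orthogonal_ker_topProj_iff [DecidableEq F] {x : Matrix (Fin n) (Fin s) F} :
    x ∈ (rtForm F n s).orthogonal (topProj A).ker ↔ ∀ j, rhoRow (x j) ≤ A j := by
  simp only [rhoRow_le_iff]
  constructor
  · intro hx j i hi
    have hker : Matrix.single j i.rev (1 : F) ∈ (topProj A).ker := by
      refine LinearMap.mem_ker.mpr (Matrix.ext fun j' i' => ?_)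
      rw [topProj_apply, Matrix.zero_apply, ite_eq_right_iff]
      refine fun htop => Matrix.single_apply_of_ne _ _ _ _ _ ?_
      rintro ⟨rfl, rfl⟩
      rw [Fin.val_rev] at htop
      omega
    simpa [rtForm_apply, rtInner_single_left] using hx _ hker
  · intro hx u hu
    show rtInner u x = 0
    refine Finset.sum_eq_zero fun j _ => Finset.sum_eq_zero fun i _ => ?_
    by_cases htop : s - A j ≤ (i : ℕ)
    · have hu' : u j i = 0 := by
        simpa [topProj_apply, htop] using Matrix.ext_iff.mpr (LinearMap.mem_ker.mp hu) j i
      rw [hu', zero_mul]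
    · rw [hx j i.rev (by rw [Fin.val_rev]; omega), mul_zero]

theorem map_topProj_eq_range_iff [DecidableEq F] (D : Submodule F (Matrix (Fin n) (Fin s) F)) :
    D.map (topProj A) = (topProj A).range ↔
      ∀ Ω ∈ dualCode D, (∀ j, rhoRow (Ω j) ≤ A j) → Ω = 0 := by
  rw [Submodule.map_eq_range_iff_sup_ker_eq_top,
    ← LinearMap.BilinForm.orthogonal_inf_orthogonal_eq_bot_iff rtForm_nondegenerate,
    ← dualCode_eq_orthogonal, eq_bot_iff]
  simp only [SetLike.le_def, Submodule.mem_inf, Submodule.mem_bot, mem_orthogonal_ker_topProj_iff,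
    and_imp]

theorem forall_rhoRow_le_imp_eq_zero_iff [DecidableEq F] {S : Set (Matrix (Fin n) (Fin s) F)}
    {k : ℕ} (hk : k ≤ n * s) :
    (∀ A : Fin n → ℕ, (∀ j, A j ≤ s) → ∑ j, A j = k →
        ∀ Ω ∈ S, (∀ j, rhoRow (Ω j) ≤ A j) → Ω = 0) ↔
      ∀ Ω ∈ S, Ω ≠ 0 → k + 1 ≤ rhoMat Ω := by
  constructor
  · intro h Ω hΩ hne
    by_contra! hlt
    obtain ⟨A, hρA, hA, hAk⟩ := Fintype.exists_ge_bounded_sum_eq (fun j => rhoRow_le (Ω j))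
      (show rhoMat Ω ≤ k by omega) (by simpa using hk)
    exact hne (h A hA hAk Ω hΩ hρA)
  · intro h A _ hAk Ω hΩ hρA
    by_contra hne
    have hle : rhoMat Ω ≤ ∑ j, A j := Finset.sum_le_sum fun j _ => hρA j
    have hgt := h Ω hΩ hne
    omega

end RTSpace

open RTSpace in
theorem dual_distribution_box_count_iff_weight_general {q n s d δ : ℕ}
    (F : Type*) [Field F] [Fintype F] [DecidableEq F]
    (hq : Fintype.card F = q) (φ : F ≃ Fin q)
    (hδd : δ ≤ d) (D : Submodule F (Matrix (Fin n) (Fin s) F))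
    (hdim : Module.finrank F D = d) :
    (∀ A m : Fin n → ℕ, (∀ j, A j ≤ s) → (∑ j, A j) + δ = d →
        (∀ j, m j < q ^ (A j)) →
        Nat.card {Ω : Matrix (Fin n) (Fin s) F // Ω ∈ D ∧
          ∀ j, (m j : ℝ) / (q : ℝ) ^ (A j) ≤ coordOf φ Ω j ∧
            coordOf φ Ω j < ((m j : ℝ) + 1) / (q : ℝ) ^ (A j)} = q ^ δ) ↔
      (∀ Ω ∈ dualCode D, Ω ≠ 0 → d - δ + 1 ≤ rhoMat Ω) := by
  have hdns : d ≤ n * s := by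
    simpa [hdim, Module.finrank_matrix] using Submodule.finrank_le D
  have hcard : Nat.card D = q ^ d := by
    rw [Module.natCard_eq_pow_finrank (K := F), Nat.card_eq_fintype_card, hq, hdim]
  have hweight := forall_rhoRow_le_imp_eq_zero_iff
    (S := (dualCode D : Set (Matrix (Fin n) (Fin s) F))) ((Nat.sub_le d δ).trans hdns)
  simp only [SetLike.mem_coe] at hweight
  rw [← hweight]
  refine forall_congr' fun A => ?_
  rw [forall_comm]
  refine forall_congr' fun hA => ?_
  rw [forall_comm]
  refine imp_congr_ctx (by omega) fun hAδ => ?_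
  rw [← map_topProj_eq_range_iff, ← forall_card_boxIndex_eq_iff φ hA D (δ := δ)
    (by rw [hcard, hAδ, Nat.sub_add_cancel hδd])]
  refine forall_congr' fun m => imp_congr_right fun _ => ?_
  simp only [forall_mem_box_iff_boxIndex_eq φ hA]

theorem dual_distribution_box_count_iff_weight {q n s d δ : ℕ}
    (F : Type*) [Field F] [Fintype F] [DecidableEq F]
    (hq : Fintype.card F = q) (φ : F ≃ Fin q) (hφ : (φ 0 : ℕ) = 0)
    (hδd : δ ≤ d) (D : Submodule F (Matrix (Fin n) (Fin s) F))
    (hdim : Module.finrank F D = d) :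
    (∀ A m : Fin n → ℕ, (∀ j, A j ≤ s) → (∑ j, A j) + δ = d →
        (∀ j, m j < q ^ (A j)) →
        Nat.card {Ω : Matrix (Fin n) (Fin s) F // Ω ∈ D ∧
          ∀ j, (m j : ℝ) / (q : ℝ) ^ (A j) ≤ coordOf φ Ω j ∧
            coordOf φ Ω j < ((m j : ℝ) + 1) / (q : ℝ) ^ (A j)} = q ^ δ) ↔
      (∀ Ω ∈ dualCode D, Ω ≠ 0 → d - δ + 1 ≤ rhoMat Ω) :=
  dual_distribution_box_count_iff_weight_general F hq φ hδd D hdim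
end

section
/- Peano's map does not decrease ρ-weight: let π_g : Mat_{g,s}(F_q) → Mat_{1,gs}(F_q) interleave the rows ω_1,...,ω_g of Ω into the single row (ξ^{(1)}_1,...,ξ^{(g)}_1, ξ^{(1)}_2,...,ξ^{(g)}_2, ..., ξ^{(1)}_s,...,ξ^{(g)}_s). Then for every Ω ∈ Mat_{g,s}(F_q), ρ(π_g Ω) ≥ ρ(Ω), and the Hamming weights agree: κ(π_g Ω) = κ(Ω). -/
/-- Peano's map `π_g`: interleave the rows `ω_1, ..., ω_g` of a `g × s` matrix into the
single row `(ξ^{(1)}_1, ..., ξ^{(g)}_1, ξ^{(1)}_2, ..., ξ^{(g)}_2, ..., ξ^{(1)}_s, ..., ξ^{(g)}_s)`,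
i.e. entry `t` of the image row is `Ω (t mod g) (t div g)`. -/
def peanoMap {F : Type*} {g s : ℕ} (hg : 0 < g) (Ω : Matrix (Fin g) (Fin s) F) :
    Fin (g * s) → F :=
  fun t => Ω ⟨t.1 % g, Nat.mod_lt _ hg⟩
    ⟨t.1 / g, (Nat.div_lt_iff_lt_mul hg).2 (mul_comm g s ▸ t.2)⟩

theorem peano_rho_hamming {g s : ℕ} (F : Type*) [Field F] [DecidableEq F] (hg : 0 < g)
    (Ω : Matrix (Fin g) (Fin s) F) :
    rhoMat Ω ≤ rhoRow (peanoMap hg Ω) ∧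
    (Finset.univ.filter fun t : Fin (g * s) => peanoMap hg Ω t ≠ 0).card
      = (Finset.univ.filter fun p : Fin g × Fin s => Ω p.1 p.2 ≠ 0).card := by
  have keyA : ∀ (i : Fin g) (j : Fin s), Ω i j ≠ 0 →
      g * j.1 + i.1 + 1 ≤ rhoRow (peanoMap hg Ω) := by
    intro i j hij
    have htlt : g * j.1 + i.1 < g * s := by
      have h1 : g * j.1 + i.1 < g * (j.1 + 1) := by
        have he : g * (j.1 + 1) = g * j.1 + g := by ring
        have := i.2; omega
      exact lt_of_lt_of_le h1 (Nat.mul_le_mul_left _ j.2)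
    set t : Fin (g * s) := ⟨g * j.1 + i.1, htlt⟩ with ht
    have hmod : t.1 % g = i.1 := by
      simp [ht, Nat.mul_add_mod, Nat.mod_eq_of_lt i.2]
    have hdiv : t.1 / g = j.1 := by
      simp [ht, Nat.mul_add_div hg, Nat.div_eq_of_lt i.2]
    have h1 : peanoMap hg Ω t = Ω i j := by
      show Ω ⟨t.1 % g, _⟩ ⟨t.1 / g, _⟩ = Ω i j
      congr 1
      · exact Fin.ext hmod
      · exact Fin.ext hdiv
    have hmem : t ∈ Finset.univ.filter fun t => peanoMap hg Ω t ≠ 0 := by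
      simp [h1, hij]
    have := Finset.le_sup (f := fun t : Fin (g * s) => t.1 + 1) hmem
    simpa [rhoRow, ht] using this
  have exj : ∀ i : Fin g, rhoRow (Ω i) ≠ 0 →
      ∃ j : Fin s, Ω i j ≠ 0 ∧ rhoRow (Ω i) = j.1 + 1 := by
    intro i h
    have hne : (Finset.univ.filter fun j => Ω i j ≠ 0).Nonempty := by
      by_contra hemp
      rw [Finset.not_nonempty_iff_eq_empty] at hemp
      simp [rhoRow, hemp] at h
    obtain ⟨j, hj, hj2⟩ := Finset.exists_mem_eq_sup _ hne (fun j : Fin s => j.1 + 1)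
    exact ⟨j, by simpa using hj, hj2⟩
  constructor
  · by_cases hzero : ∀ i : Fin g, rhoRow (Ω i) = 0
    · simp [rhoMat, hzero]
    · push_neg at hzero
      obtain ⟨i0, hi0⟩ := hzero
      obtain ⟨istar, -, hmax⟩ := Finset.exists_max_image Finset.univ
        (fun i : Fin g => g * rhoRow (Ω i) + i.1) ⟨i0, Finset.mem_univ i0⟩
      have hrstar : rhoRow (Ω istar) ≠ 0 := by
        intro h0
        have h := hmax i0 (Finset.mem_univ i0)
        have h1 : 1 ≤ rhoRow (Ω i0) := Nat.one_le_iff_ne_zero.2 hi0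
        have h2 : g * 1 ≤ g * rhoRow (Ω i0) := Nat.mul_le_mul_left _ h1
        have := istar.2
        simp only [h0] at h
        omega
      obtain ⟨jstar, hjne, hjeq⟩ := exj istar hrstar
      have hMb : g * jstar.1 + istar.1 + 1 ≤ rhoRow (peanoMap hg Ω) := keyA istar jstar hjne
      have hb : ∀ i : Fin g, rhoRow (Ω i) + (if i.1 ≤ istar.1 then 0 else 1)
          ≤ rhoRow (Ω istar) := by
        intro i
        have h := hmax i (Finset.mem_univ i)
        by_cases hle : i.1 ≤ istar.1
        · simp only [if_pos hle]
          have hlt : g * rhoRow (Ω i) < g * (rhoRow (Ω istar) + 1) := by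
            have hexp : g * (rhoRow (Ω istar) + 1) = g * rhoRow (Ω istar) + g := by ring
            have := istar.2
            omega
          exact Nat.lt_succ_iff.mp (Nat.lt_of_mul_lt_mul_left hlt)
        · simp only [if_neg hle]
          have hlt : g * rhoRow (Ω i) < g * rhoRow (Ω istar) := by omega
          exact Nat.lt_of_mul_lt_mul_left hlt
      have hsum : (∑ i, rhoRow (Ω i)) + (∑ i : Fin g, if i.1 ≤ istar.1 then 0 else 1)
          ≤ g * rhoRow (Ω istar) := by
        rw [← Finset.sum_add_distrib]
        calc (∑ i : Fin g, (rhoRow (Ω i) + if i.1 ≤ istar.1 then 0 else 1))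
            ≤ ∑ _i : Fin g, rhoRow (Ω istar) := Finset.sum_le_sum (fun i _ => hb i)
          _ = g * rhoRow (Ω istar) := by
              simp [Finset.sum_const, Finset.card_univ, mul_comm]
      have hcount : (∑ i : Fin g, if i.1 ≤ istar.1 then (0:ℕ) else 1)
          = g - (istar.1 + 1) := by
        rw [Fin.sum_univ_eq_sum_range (fun n => if n ≤ istar.1 then (0:ℕ) else 1)]
        rw [Finset.sum_ite, Finset.sum_const, Finset.sum_const]
        have : (Finset.range g).filter (fun n => ¬ n ≤ istar.1) = Finset.Ico (istar.1 + 1) g := by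
          ext n
          simp only [Finset.mem_filter, Finset.mem_range, Finset.mem_Ico, not_le]
          omega
      -- filter for ite: filter (n ≤ istar.1) gives 0s
        rw [this, Nat.card_Ico]
        simp
      rw [hjeq] at hsum
      have hexp : g * (jstar.1 + 1) = g * jstar.1 + g := by ring
      rw [hcount] at hsum
      have hig : istar.1 < g := istar.2
      unfold rhoMat
      omega
  · refine Finset.card_bij'
      (fun t _ => (⟨t.1 % g, Nat.mod_lt _ hg⟩, ⟨t.1 / g, (Nat.div_lt_iff_lt_mul hg).2 (mul_comm g s ▸ t.2)⟩))
      (fun p _ => ⟨g * p.2.1 + p.1.1, by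
        have h1 : g * p.2.1 + p.1.1 < g * (p.2.1 + 1) := by
          have he : g * (p.2.1 + 1) = g * p.2.1 + g := by ring
          have := p.1.2; omega
        exact lt_of_lt_of_le h1 (Nat.mul_le_mul_left _ p.2.2)⟩)
      ?_ ?_ ?_ ?_
    · intro t ht
      simp only [Finset.mem_filter, Finset.mem_univ, true_and] at ht ⊢
      exact ht
    · intro p hp
      simp only [Finset.mem_filter, Finset.mem_univ, true_and] at hp ⊢
      have hmod : (g * p.2.1 + p.1.1) % g = p.1.1 := by
        simp [Nat.mul_add_mod, Nat.mod_eq_of_lt p.1.2]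
      have hdiv : (g * p.2.1 + p.1.1) / g = p.2.1 := by
        simp [Nat.mul_add_div hg, Nat.div_eq_of_lt p.1.2]
      show peanoMap hg Ω _ ≠ 0
      unfold peanoMap
      simp only [hmod, hdiv]
      convert hp using 2
    · intro t ht
      exact Fin.ext (by simp [Nat.div_add_mod, Nat.mod_add_div])
    · intro p hp
      have hmod : (g * p.2.1 + p.1.1) % g = p.1.1 := by
        simp [Nat.mul_add_mod, Nat.mod_eq_of_lt p.1.2]
      have hdiv : (g * p.2.1 + p.1.1) / g = p.2.1 := by
        simp [Nat.mul_add_div hg, Nat.div_eq_of_lt p.1.2]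
      ext <;> simp [hmod, hdiv]
end
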